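/- Let α be a prime element of ℤ[ω] whose absolute norm m = Nα is a rational prime with gcd(m, 6) = 1, and let ᾱ denote the complex conjugate of α (so α and ᾱ are nonassociate prime elements of ℤ[ω] coprime to 2 and to √−3 = 1 + 2ω). If α ≡ 1 (mod 4ℤ[ω]) then [α/ᾱ] = [α/√−3], and if α ≡ −1, √−3, or −√−3 (mod 4ℤ[ω]) then [α/ᾱ] = −[α/√−3]. -/

import Mathlib

/-!
Write `α = a + bω`. Then `α + ᾱ = 2a - b`, so `α ≡ 2a - b (mod ᾱ)`; as `ᾱ` has prime norm `m`,
Euler's criterion identifies `[α/ᾱ]` with the Legendre symbol `(2a - b / m)`. Likewise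
`ω ≡ 1 (mod √−3)` gives `[α/√−3] = (a + b / 3)`.

Each of the congruences `α ≡ ±1, ±√−3 (mod 4)` makes `a` odd and `b = 2c` even, with `c` even
for `±1` and odd for `±√−3`. With `u = a - c` this gives `m = u² + 3c²`, `2a - b = 2u` and
`u ≡ a + b (mod 3)`. For the odd part `r` of `u` we have `m ≡ 3c² (mod r)`, so quadratic
reciprocity turns `(r / m)` into `(r / 3)`, up to the sign `χ₄(r)` when `m ≡ 1 (mod 4)`; the
powers of `2` contribute `(2 / m)`, which is read off from `m mod 8`.
-/

noncomputable section

/-- `ω = (−1+√−3)/2 ∈ ℂ`. -/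
def ω : ℂ := (-1 + Complex.I * Real.sqrt 3) / 2

/-- The ring `ℤ[ω]` of Eisenstein integers, as a subalgebra of `ℂ`. -/
def Zω : Subalgebra ℤ ℂ := Algebra.adjoin ℤ {ω}

/-- `ω` as an element of `ℤ[ω]`. -/
def ωZ : Zω := ⟨ω, Algebra.subset_adjoin (Set.mem_singleton ω)⟩

/-- `√−3 = 1 + 2ω` as an element of `ℤ[ω]`. -/
def sqrtm3 : Zω := 1 + 2 * ωZ

open scoped NumberTheorySymbols
open ZMod

theorem ω_sq : ω ^ 2 = -1 - ω := by
  have hX : (Complex.I * (Real.sqrt 3 : ℝ)) ^ 2 = -3 := by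
    rw [mul_pow, Complex.I_sq, ← Complex.ofReal_pow, Real.sq_sqrt (by norm_num : (0 : ℝ) ≤ 3)]
    norm_num
  unfold ω
  linear_combination hX / 4

theorem conj_ω : starRingEnd ℂ ω = -1 - ω := by
  unfold ω
  rw [map_div₀, map_add, map_mul, Complex.conj_I, map_neg, map_one, Complex.conj_ofReal,
    map_ofNat]
  ring

theorem ω_re : ω.re = -(1 / 2) := by norm_num [ω]

theorem ω_im : ω.im = Real.sqrt 3 / 2 := by simp [ω]

theorem coe_ωZ : (ωZ : ℂ) = ω := rfl

theorem coe_sqrtm3 : (sqrtm3 : ℂ) = 1 + 2 * ω := rfl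

theorem intCast_add_mul_ω_inj {a b a' b' : ℤ} (h : (a : ℂ) + b * ω = a' + b' * ω) :
    a = a' ∧ b = b' := by
  have him := congrArg Complex.im h
  have hre := congrArg Complex.re h
  simp only [Complex.add_re, Complex.add_im, Complex.mul_re, Complex.mul_im, Complex.intCast_re,
    Complex.intCast_im, ω_re, ω_im] at him hre
  have hb : b = b' := by
    have : (b : ℝ) = b' := by nlinarith [Real.sqrt_pos.mpr (show (0 : ℝ) < 3 by norm_num)]
    exact_mod_cast this
  subst hb
  exact ⟨by exact_mod_cast (by linarith : (a : ℝ) = a'), rfl⟩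

theorem exists_eq_intCast_add_mul_ω {z : ℂ} (hz : z ∈ Zω) : ∃ a b : ℤ, z = a + b * ω := by
  induction hz using Algebra.adjoin_induction with
  | mem x hx =>
    rw [Set.mem_singleton_iff] at hx
    exact ⟨0, 1, by rw [hx]; push_cast; ring⟩
  | algebraMap r => exact ⟨r, 0, by simp⟩
  | add x y _ _ ihx ihy =>
    obtain ⟨a, b, rfl⟩ := ihx
    obtain ⟨c, d, rfl⟩ := ihy
    exact ⟨a + c, b + d, by push_cast; ring⟩
  | mul x y _ _ ihx ihy =>
    obtain ⟨a, b, rfl⟩ := ihx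
    obtain ⟨c, d, rfl⟩ := ihy
    exact ⟨a * c - b * d, a * d + b * c - b * d, by
      push_cast
      linear_combination (b * d : ℂ) * ω_sq⟩

theorem conj_intCast_add_mul_ω (a b : ℤ) :
    starRingEnd ℂ (a + b * ω) = ((a - b : ℤ) : ℂ) + ((-b : ℤ) : ℂ) * ω := by
  rw [map_add, map_mul, conj_ω, map_intCast, map_intCast]
  push_cast
  ring

theorem intCast_add_mul_ω_mul_conj (a b : ℤ) :
    (a + b * ω) * starRingEnd ℂ (a + b * ω) = ((a ^ 2 - a * b + b ^ 2 : ℤ) : ℂ) := by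
  rw [conj_intCast_add_mul_ω]
  push_cast
  linear_combination (-(b : ℂ) ^ 2) * ω_sq

theorem conj_mem_Zω {z : ℂ} (hz : z ∈ Zω) : starRingEnd ℂ z ∈ Zω := by
  obtain ⟨a, b, rfl⟩ := exists_eq_intCast_add_mul_ω hz
  rw [conj_intCast_add_mul_ω]
  exact add_mem (Subalgebra.intCast_mem _ _) (mul_mem (Subalgebra.intCast_mem _ _) ωZ.2)

theorem intCast_dvd_of_coe_eq {n x y : ℤ} {β : Zω} (h : (n : Zω) ∣ β)
    (hβ : (β : ℂ) = x + y * ω) : n ∣ x ∧ n ∣ y := by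
  obtain ⟨ε, rfl⟩ := h
  obtain ⟨p, q, hpq⟩ := exists_eq_intCast_add_mul_ω ε.2
  have h : ((x : ℤ) : ℂ) + (y : ℤ) * ω = ((n * p : ℤ) : ℂ) + (n * q : ℤ) * ω := by
    rw [← hβ]
    push_cast [hpq]
    ring
  obtain ⟨hx, hy⟩ := intCast_add_mul_ω_inj h
  exact ⟨⟨p, hx⟩, ⟨q, hy⟩⟩

/-- `π ∣ k` gives `p = π·π̄ ∣ k²` in `ℤ[ω]`, hence in `ℤ`. -/
theorem natCast_dvd_of_dvd_intCast {p : ℕ} (hp : p.Prime) {π : Zω}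
    (hπ : (p : ℂ) = π * starRingEnd ℂ π) {k : ℤ} (h : π ∣ (k : Zω)) : (p : ℤ) ∣ k := by
  obtain ⟨ε, hε⟩ := h
  have hk : (k : ℂ) = π * ε := by simpa using congrArg Subtype.val hε
  have hk' : (k : ℂ) = starRingEnd ℂ π * starRingEnd ℂ ε := by
    simpa using congrArg (starRingEnd ℂ) hk
  have hsq : ((p : ℤ) : Zω) ∣ ((k ^ 2 : ℤ) : Zω) := by
    refine ⟨⟨ε * starRingEnd ℂ ε, mul_mem ε.2 (conj_mem_Zω ε.2)⟩, Subtype.ext ?_⟩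
    push_cast
    rw [pow_two]
    nth_rw 1 [hk]
    rw [hk', hπ]
    ring
  have hpk := intCast_dvd_of_coe_eq (x := k ^ 2) (y := 0) hsq (by push_cast; ring)
  exact (Nat.prime_iff_prime_int.mp hp).dvd_of_dvd_pow hpk.1

theorem legendreSym_eq_of_dvd_pow_sub {p : ℕ} [Fact p.Prime] (hp : p ≠ 2) {x s : ℤ}
    (hs : s = 1 ∨ s = -1) (h : (p : ℤ) ∣ x ^ ((p - 1) / 2) - s) : legendreSym p x = s := by
  have hp3 : 3 ≤ p := by have := (Fact.out : p.Prime).two_le; omega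
  have hpodd := Nat.odd_iff.mp ((Fact.out : p.Prime).odd_of_ne_two hp)
  have hcast : (legendreSym p x : ZMod p) = s := by
    rw [legendreSym.eq_pow, show p / 2 = (p - 1) / 2 by omega, ← sub_eq_zero]
    exact_mod_cast (ZMod.intCast_zmod_eq_zero_iff_dvd _ p).mpr h
  have hdvd := (ZMod.intCast_eq_intCast_iff_dvd_sub _ _ _).mp hcast
  rw [jacobiSym.legendreSym.to_jacobiSym] at hdvd ⊢
  have hlt : |s - J(x | p)| < p := by
    rcases jacobiSym.trichotomy x p with hJ | hJ | hJ <;> rcases hs with rfl | rfl <;> rw [hJ] <;>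
      norm_num <;> omega
  exact (sub_eq_zero.mp (Int.eq_zero_of_abs_lt_dvd hdvd hlt)).symm

theorem legendreSym_eq_of_dvd_sub_intCast {p : ℕ} [Fact p.Prime] (hp : p ≠ 2) {π α : Zω}
    (hπ : (p : ℂ) = π * starRingEnd ℂ π) {k s : ℤ} (hk : π ∣ α - k) (hs : s = 1 ∨ s = -1)
    (h : π ∣ α ^ ((p - 1) / 2) - s) : legendreSym p k = s := by
  have hks : π ∣ ((k ^ ((p - 1) / 2) - s : ℤ) : Zω) := by
    have := dvd_sub h (hk.trans (sub_dvd_pow_sub_pow α k ((p - 1) / 2)))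
    rwa [sub_sub_sub_cancel_left, ← Int.cast_pow, ← Int.cast_sub] at this
  exact legendreSym_eq_of_dvd_pow_sub hp hs (natCast_dvd_of_dvd_intCast Fact.out hπ hks)

theorem conj_dvd_sub_trace {α αbar : Zω} {a b : ℤ} (hab : (α : ℂ) = a + b * ω)
    (hαbar : (αbar : ℂ) = starRingEnd ℂ α) : αbar ∣ α - ((2 * a - b : ℤ) : Zω) := by
  refine ⟨-1, Subtype.ext ?_⟩
  simp only [Subalgebra.coe_sub, Subalgebra.coe_mul, Subalgebra.coe_neg, Subalgebra.coe_one,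
    SubringClass.coe_intCast]
  rw [hαbar, hab, conj_intCast_add_mul_ω]
  push_cast
  ring

theorem sqrtm3_dvd_sub {α : Zω} {a b : ℤ} (hab : (α : ℂ) = a + b * ω) :
    sqrtm3 ∣ α - ((a + b : ℤ) : Zω) := by
  refine ⟨b * (1 + ωZ), Subtype.ext ?_⟩
  push_cast [hab, coe_sqrtm3, coe_ωZ]
  linear_combination (-2 * b : ℂ) * ω_sq

theorem natCast_three_eq_sqrtm3_mul_conj : ((3 : ℕ) : ℂ) = sqrtm3 * starRingEnd ℂ sqrtm3 := by
  rw [coe_sqrtm3, map_add, map_mul, map_one, map_ofNat, conj_ω]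
  push_cast
  linear_combination (4 : ℂ) * ω_sq

theorem isCoprime_of_squarefree_sq_sub_mul_add_sq {p a b : ℤ} (hp : Squarefree p)
    (h : p = a ^ 2 - a * b + b ^ 2) : IsCoprime a b := by
  rw [← gcd_isUnit_iff]
  apply hp
  obtain ⟨x, hx⟩ := gcd_dvd_left a b
  obtain ⟨y, hy⟩ := gcd_dvd_right a b
  generalize gcd a b = g at hx hy ⊢
  subst hx hy
  exact ⟨x ^ 2 - x * y + y ^ 2, by rw [h]; ring⟩

theorem Int.sq_mod_eight_eq_one_of_odd {x : ℤ} (hx : Odd x) : x ^ 2 % 8 = 1 := by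
  obtain ⟨k, rfl⟩ := hx
  obtain ⟨p, hp⟩ := Int.even_mul_succ_self k
  have hsq : (2 * k + 1) ^ 2 = 4 * (k * (k + 1)) + 1 := by ring
  omega

theorem jacobiSym_natCast_eq_of_dvd_sub_three_mul_sq {m n : ℕ} (hm : Odd m) (hn : Odd n) {c : ℤ}
    (hcn : c.gcd n = 1) (hdvd : (n : ℤ) ∣ m - 3 * c ^ 2) :
    J(n | m) = J(n | 3) * if m % 4 = 1 then χ₄ n else 1 := by
  have hmn : J(m | n) = J(3 | n) := by
    rw [jacobiSym.mod_left' (Int.modEq_iff_dvd.mpr hdvd).symm, jacobiSym.mul_left,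
      jacobiSym.sq_one' hcn, mul_one]
  have h3n := jacobiSym.quadratic_reciprocity_if (a := 3) (b := n) rfl (Nat.odd_iff.mp hn)
  have hnm := jacobiSym.quadratic_reciprocity_if (Nat.odd_iff.mp hn) (Nat.odd_iff.mp hm)
  push_cast at h3n hnm
  rw [← hnm, hmn, ← h3n]
  rcases Nat.odd_mod_four_iff.mp (Nat.odd_iff.mp hn) with hn4 | hn4 <;>
    rcases Nat.odd_mod_four_iff.mp (Nat.odd_iff.mp hm) with hm4 | hm4
  all_goals first
    | rw [χ₄_nat_one_mod_four hn4]; simp [hn4, hm4]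
    | rw [χ₄_nat_three_mod_four hn4]; simp [hn4, hm4]

theorem jacobiSym_eq_of_dvd_sub_three_mul_sq {m : ℕ} (hm : Odd m) {r c : ℤ} (hr : Odd r)
    (hrc : IsCoprime r c) (hdvd : r ∣ m - 3 * c ^ 2) :
    J(r | m) = J(r | 3) * if m % 4 = 1 then χ₄ r else 1 := by
  have hcn : c.gcd r.natAbs = 1 := by
    simpa [Int.gcd, Int.natAbs_abs] using Int.isCoprime_iff_gcd_eq_one.mp hrc.symm
  have hnat := jacobiSym_natCast_eq_of_dvd_sub_three_mul_sq hm (Int.natAbs_odd.mpr hr) hcn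
    (Int.natAbs_dvd.mpr hdvd)
  rcases Int.natAbs_eq r with hr' | hr' <;> rw [hr']
  · exact hnat
  · have hχ : χ₄ (-1) = -1 := by decide
    rw [jacobiSym.neg _ hm, jacobiSym.neg _ (by decide), hnat, Int.cast_neg, neg_eq_neg_one_mul,
      map_mul, hχ]
    rcases Nat.odd_mod_four_iff.mp (Nat.odd_iff.mp hm) with hm4 | hm4
    · simp [hm4, χ₄_nat_one_mod_four hm4]
    · simp [hm4, χ₄_nat_three_mod_four hm4]

theorem jacobiSym_two_mul_sub_of_four_dvd {m : ℕ} {a b : ℤ}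
    (hm : (m : ℤ) = a ^ 2 - a * b + b ^ 2) (hab : IsCoprime a b) (ha : Odd a) (hb : 4 ∣ b) :
    J(2 * a - b | m) = χ₄ a * J(a + b | 3) := by
  obtain ⟨l, rfl⟩ := hb
  obtain ⟨u, rfl⟩ : ∃ u, a = u + 2 * l := ⟨a - 2 * l, by ring⟩
  have hu : Odd u := by simpa using ha.sub_even (even_two_mul l)
  have hmu : (m : ℤ) = u ^ 2 + 12 * l ^ 2 := by rw [hm]; ring
  have hm8 : (m : ℤ) % 8 = 1 + 4 * (l % 2) := by
    have hl : l ^ 2 % 2 = l % 2 := by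
      rcases Int.emod_two_eq l with h | h <;> simp [pow_two, Int.mul_emod, h]
    have := Int.sq_mod_eight_eq_one_of_odd hu
    omega
  have hmodd : Odd m := by rw [← Int.odd_coe_nat, Int.odd_iff]; omega
  have huc : IsCoprime u (2 * l) := by
    rw [show 4 * l = 2 * (2 * l) by ring] at hab
    exact .of_add_mul_left_left (z := 1) (by simpa using hab.of_mul_right_right)
  rw [show 2 * (u + 2 * l) - 4 * l = 2 * u by ring, jacobiSym.mul_left, jacobiSym.at_two hmodd,
    jacobiSym_eq_of_dvd_sub_three_mul_sq hmodd hu huc ⟨u, by rw [hmu]; ring⟩, if_pos (by omega),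
    jacobiSym.mod_left' (a₁ := u + 2 * l + 4 * l) (a₂ := u) (by omega), χ₈_nat_eq_if_mod_eight,
    χ₄_int_eq_if_mod_four u, χ₄_int_eq_if_mod_four (u + 2 * l)]
  have := Int.odd_iff.mp hu
  split_ifs <;> first | ring1 | omega

theorem jacobiSym_two_mul_sub_of_emod_four_eq_two {m : ℕ} {a b : ℤ}
    (hm : (m : ℤ) = a ^ 2 - a * b + b ^ 2) (hab : IsCoprime a b) (ha : Odd a) (hb : b % 4 = 2) :
    J(2 * a - b | m) = -J(a + b | 3) := by
  obtain ⟨c, rfl⟩ : ∃ c, b = 2 * c := ⟨b / 2, by omega⟩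
  obtain ⟨u, rfl⟩ : ∃ u, a = u + c := ⟨a - c, by ring⟩
  have hc : Odd c := Int.odd_iff.mpr (by omega)
  have hu : u % 2 = 0 := by have := Int.odd_iff.mp ha; omega
  have hmu : (m : ℤ) = u ^ 2 + 3 * c ^ 2 := by rw [hm]; ring
  have huc : IsCoprime u c :=
    .of_add_mul_left_left (z := 1) (by simpa using hab.of_mul_right_right)
  have hc8 := Int.sq_mod_eight_eq_one_of_odd hc
  rw [show 2 * (u + c) - 2 * c = 2 * u by ring,
    jacobiSym.mod_left' (a₁ := u + c + 2 * c) (a₂ := u) (by omega)]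
  rcases eq_or_ne u 0 with rfl | hu0
  · rw [mul_zero, jacobiSym.zero_left (by omega), jacobiSym.zero_left (by norm_num), neg_zero]
  have hfin : FiniteMultiplicity (2 : ℤ) u := Int.finiteMultiplicity_iff.mpr ⟨by decide, hu0⟩
  obtain ⟨r, hur, hr2⟩ := hfin.exists_eq_pow_mul_and_not_dvd
  generalize multiplicity 2 u = k at hur
  subst hur
  have hr : Odd r := Int.odd_iff.mpr (by omega)
  have hk : k ≠ 0 := by rintro rfl; rw [pow_zero, one_mul] at hu; omega
  obtain ⟨j, rfl⟩ := Nat.exists_eq_add_one_of_ne_zero hk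
  have hr8 := Int.sq_mod_eight_eq_one_of_odd hr
  -- `m ≡ 7 (mod 8)` if `j = 0` and `m ≡ 3 (mod 8)` otherwise, so `(2 / m)^(j + 2) = (-1)^(j + 2)`
  have hm8 : (m : ℤ) % 8 = 7 ∧ j = 0 ∨ (m : ℤ) % 8 = 3 ∧ j ≠ 0 := by
    rcases j with _ | j
    · have : (m : ℤ) = 4 * r ^ 2 + 3 * c ^ 2 := by rw [hmu]; ring
      omega
    · have : (m : ℤ) = 16 * (2 ^ j * r) ^ 2 + 3 * c ^ 2 := by rw [hmu]; ring
      omega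
  have hmodd : Odd m := by rw [← Int.odd_coe_nat, Int.odd_iff]; omega
  have hrm : r ∣ m - 3 * c ^ 2 := ⟨2 ^ (j + 1) * 2 ^ (j + 1) * r, by rw [hmu]; ring⟩
  have hχ3 : χ₈ (3 : ℕ) = -1 := by decide
  rw [← mul_assoc, ← pow_succ', jacobiSym.mul_left, jacobiSym.pow_left, jacobiSym.mul_left,
    jacobiSym.pow_left, jacobiSym_eq_of_dvd_sub_three_mul_sq hmodd hr
      (huc.of_isCoprime_of_dvd_left (dvd_mul_left _ _)) hrm, jacobiSym.at_two hmodd,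
    jacobiSym.at_two (by decide), if_neg (by omega), mul_one, hχ3, χ₈_nat_eq_if_mod_eight,
    if_neg (by omega)]
  rcases hm8 with ⟨h8, rfl⟩ | ⟨h8, -⟩
  · rw [if_pos (by omega)]; ring
  · rw [if_neg (by omega)]; ring

theorem stmt11_general (α : Zω)
    (m : ℕ) (hm : ((m : ℂ)) = (α : ℂ) * (starRingEnd ℂ) (α : ℂ))
    (hmp : Nat.Prime m) (hm6 : Nat.Coprime m 6)
    (αbar : Zω) (hαbar : (αbar : ℂ) = (starRingEnd ℂ) (α : ℂ))
    (s t : ℤ) (hs : s = 1 ∨ s = -1) (ht : t = 1 ∨ t = -1)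
    (hsd : αbar ∣ α ^ ((m - 1) / 2) - (s : Zω))
    (htd : sqrtm3 ∣ α ^ (((3 : ℕ) - 1) / 2) - (t : Zω)) :
    ((4 : Zω) ∣ α - 1 → s = t) ∧
    (((4 : Zω) ∣ α + 1 ∨ (4 : Zω) ∣ α - sqrtm3 ∨ (4 : Zω) ∣ α + sqrtm3) → s = -t) := by
  have : Fact m.Prime := ⟨hmp⟩
  have : Fact (Nat.Prime 3) := ⟨Nat.prime_three⟩
  obtain ⟨a, b, hab⟩ := exists_eq_intCast_add_mul_ω α.2
  have hma : (m : ℤ) = a ^ 2 - a * b + b ^ 2 := by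
    have hnorm := intCast_add_mul_ω_mul_conj a b
    rw [← hab, ← hm] at hnorm
    exact_mod_cast hnorm
  have hs' : J(2 * a - b | m) = s := by
    rw [← jacobiSym.legendreSym.to_jacobiSym]
    refine legendreSym_eq_of_dvd_sub_intCast (by rintro rfl; norm_num at hm6) ?_
      (conj_dvd_sub_trace hab hαbar) hs hsd
    rw [hαbar, Complex.conj_conj, hm, mul_comm]
  have ht' : J(a + b | 3) = t := by
    rw [← jacobiSym.legendreSym.to_jacobiSym]
    exact legendreSym_eq_of_dvd_sub_intCast (by norm_num) natCast_three_eq_sqrtm3_mul_conj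
      (sqrtm3_dvd_sub hab) ht htd
  have hcop : IsCoprime a b := isCoprime_of_squarefree_sq_sub_mul_add_sq
    (Nat.prime_iff_prime_int.mp hmp).squarefree hma
  have coords : ∀ β : Zω, ∀ x y : ℤ, (4 : Zω) ∣ β → (β : ℂ) = x + y * ω → 4 ∣ x ∧ 4 ∣ y :=
    fun β x y h hβ => intCast_dvd_of_coe_eq (n := 4) (by exact_mod_cast h) hβ
  rw [← hs', ← ht']
  refine ⟨fun h => ?_, fun h => ?_⟩
  · obtain ⟨ha, hb⟩ := coords _ (a - 1) b h (by push_cast [hab]; ring)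
    rw [jacobiSym_two_mul_sub_of_four_dvd hma hcop (Int.odd_iff.mpr (by omega)) hb,
      χ₄_int_one_mod_four (by omega), one_mul]
  rcases h with h | h | h
  · obtain ⟨ha, hb⟩ := coords _ (a + 1) b h (by push_cast [hab]; ring)
    rw [jacobiSym_two_mul_sub_of_four_dvd hma hcop (Int.odd_iff.mpr (by omega)) hb,
      χ₄_int_three_mod_four (by omega), neg_one_mul]
  · obtain ⟨ha, hb⟩ := coords _ (a - 1) (b - 2) h (by push_cast [hab, coe_sqrtm3]; ring)
    exact jacobiSym_two_mul_sub_of_emod_four_eq_two hma hcop (Int.odd_iff.mpr (by omega))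
      (by omega)
  · obtain ⟨ha, hb⟩ := coords _ (a + 1) (b + 2) h (by push_cast [hab, coe_sqrtm3]; ring)
    exact jacobiSym_two_mul_sub_of_emod_four_eq_two hma hcop (Int.odd_iff.mpr (by omega))
      (by omega)

/-- Let `α` be a prime of `ℤ[ω]` whose absolute norm `m = α·conj α` is a rational prime
coprime to `6`, and let `ᾱ` be its complex conjugate.  If `α ≡ 1 (mod 4ℤ[ω])` then
`[α/ᾱ] = [α/√−3]`, and if `α ≡ −1, √−3, −√−3 (mod 4ℤ[ω])` then `[α/ᾱ] = −[α/√−3]`.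
The symbol `[α/π]` is encoded as the element of `{1, −1}` congruent to
`α^{(Nπ−1)/2} (mod π)`; here `Nᾱ = m` and `N(√−3) = 3`. -/
theorem stmt11 (α : Zω) (hαp : Prime α)
    (m : ℕ) (hm : ((m : ℂ)) = (α : ℂ) * (starRingEnd ℂ) (α : ℂ))
    (hmp : Nat.Prime m) (hm6 : Nat.Coprime m 6)
    (αbar : Zω) (hαbar : (αbar : ℂ) = (starRingEnd ℂ) (α : ℂ))
    (s t : ℤ) (hs : s = 1 ∨ s = -1) (ht : t = 1 ∨ t = -1)
    (hsd : αbar ∣ α ^ ((m - 1) / 2) - (s : Zω))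
    (htd : sqrtm3 ∣ α ^ (((3 : ℕ) - 1) / 2) - (t : Zω)) :
    ((4 : Zω) ∣ α - 1 → s = t) ∧
    (((4 : Zω) ∣ α + 1 ∨ (4 : Zω) ∣ α - sqrtm3 ∨ (4 : Zω) ∣ α + sqrtm3) → s = -t) :=
  stmt11_general α m hm hmp hm6 αbar hαbar s t hs ht hsd htd
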